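/- arXiv:2408.14308 — 3 statements merged into one kernel-verified Lean document; each statement's English description precedes it below -/
import Mathlib

section
/- If f : ℝⁿ → (-∞,∞] is lower semicontinuous with bounded effective domain and has a unique minimizer x*, then the lower convex envelope f̆ of f also has x* as its unique minimizer. -/
open scoped BigOperators
open Classical

noncomputable section

/-- Convexity for extended-real-valued functions (codomain `(-∞, ∞]` modeled by `EReal`). -/
def ConvexE {X : Type*} [AddCommGroup X] [Module ℝ X] (f : X → EReal) : Prop :=
  ∀ x y : X, ∀ a b : ℝ, 0 ≤ a → 0 ≤ b → a + b = 1 →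
    f (a • x + b • y) ≤ (a : EReal) * f x + (b : EReal) * f y

/-- `f` is convex at `x`: every finite convex combination of points of `dom f`
representing `x` gives value at least `f x`. -/
def IsConvexAt {X : Type*} [AddCommGroup X] [Module ℝ X] (f : X → EReal) (x : X) : Prop :=
  ∀ (m : ℕ) (w : Fin m → ℝ) (p : Fin m → X),
    (∀ k, 0 ≤ w k) → (∑ k, w k) = 1 → (∀ k, f (p k) ≠ ⊤) →
    (∑ k, w k • p k) = x → f x ≤ ∑ k, (w k : EReal) * f (p k)

/-- The lower convex envelope: pointwise supremum of all convex minorants. -/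
def lce {X : Type*} [AddCommGroup X] [Module ℝ X] (f : X → EReal) : X → EReal :=
  fun x => sSup {y | ∃ h : X → EReal, ConvexE h ∧ (∀ z, h z ≤ f z) ∧ h x = y}

/-- The explicit formula: infimum of `∑ λₖ f xₖ` over all finite convex combinations
of points of `dom f` representing `x` (infimum of the empty set is `∞`). -/
def lceFormula {X : Type*} [AddCommGroup X] [Module ℝ X] (f : X → EReal) : X → EReal :=
  fun x => sInf {r | ∃ (m : ℕ) (w : Fin m → ℝ) (p : Fin m → X),
    (∀ k, 0 ≤ w k) ∧ (∑ k, w k) = 1 ∧ (∀ k, f (p k) ≠ ⊤) ∧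
    (∑ k, w k • p k) = x ∧ (∑ k, (w k : EReal) * f (p k)) = r}

/-!
Fix `x ≠ x*` and let `ℓ = ⟪x - x*, ·⟫`. The closed half-space `{ℓ ≥ a}`, with `a` halfway between
`ℓ x*` and `ℓ x`, misses `x*`; as `f` is lower semicontinuous with bounded domain it attains its
minimum there, so `f ≥ q > f x*` on it. Since `ℓ ≤ b` on `dom f`, the function
`f x* + (q - f x*) / (b - a) * max (ℓ - a) 0` is a convex minorant of `f` which exceeds `f x*` at
`x`, whereas the constant `f x*` is a convex minorant showing `f̆ x* = f x*`.
-/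

open Set

section ConvexEnvelope

variable {X : Type*} [AddCommGroup X] [Module ℝ X]

lemma ConvexOn.convexE_coe {g : X → ℝ} (hg : ConvexOn ℝ univ g) :
    ConvexE fun z => (g z : EReal) := by
  intro x y a b ha hb hab
  rw [← EReal.coe_mul, ← EReal.coe_mul, ← EReal.coe_add, EReal.coe_le_coe_iff]
  simpa using hg.2 (mem_univ x) (mem_univ y) ha hb hab

lemma lce_le_self (f : X → EReal) (x : X) : lce f x ≤ f x :=
  sSup_le fun _ ⟨_, _, hhf, hx⟩ => hx ▸ hhf x

lemma coe_le_lce {f : X → EReal} {g : X → ℝ} (hg : ConvexOn ℝ univ g)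
    (hgf : ∀ z, (g z : EReal) ≤ f z) (x : X) : (g x : EReal) ≤ lce f x :=
  le_sSup ⟨_, hg.convexE_coe, hgf, rfl⟩

lemma lce_eq_of_forall_coe_le {f : X → EReal} {x : X} {r : ℝ} (hr : ∀ z, (r : EReal) ≤ f z)
    (hx : f x = r) : lce f x = r :=
  le_antisymm (hx ▸ lce_le_self f x) (coe_le_lce (convexOn_const r convex_univ) hr x)

lemma coe_lt_lce_of_gap {f : X → EReal} {ℓ : X → ℝ} (hℓ : ConvexOn ℝ univ ℓ) {r q a : ℝ}
    (hrq : r < q) (hr : ∀ z, (r : EReal) ≤ f z) (hq : ∀ z, a ≤ ℓ z → (q : EReal) ≤ f z)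
    (hdom : BddAbove (ℓ '' {z | f z ≠ ⊤})) {x : X} (hx : a < ℓ x) : (r : EReal) < lce f x := by
  obtain ⟨b, hb⟩ := hdom
  -- the minorant rises linearly from `r` on `{ℓ = a}` to `q` on `{ℓ = b'}`
  set b' := max b (a + 1)
  have hab : a < b' := lt_max_of_lt_right (lt_add_one a)
  set c := (q - r) / (b' - a)
  have hc : 0 < c := div_pos (sub_pos.2 hrq) (sub_pos.2 hab)
  set g : X → ℝ := fun z => r + c * max (ℓ z - a) 0
  have hg : ConvexOn ℝ univ g :=
    (convexOn_const r convex_univ).add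
      (((hℓ.add_const (-a)).sup (convexOn_const 0 convex_univ)).smul hc.le)
  have hgf : ∀ z, (g z : EReal) ≤ f z := by
    intro z
    rcases le_or_gt (ℓ z) a with hza | hza
    · simpa [g, max_eq_right (sub_nonpos.2 hza)] using hr z
    rcases eq_or_ne (f z) ⊤ with htop | htop
    · simp [htop]
    have hzb : ℓ z ≤ b' := (hb ⟨z, htop, rfl⟩).trans (le_max_left _ _)
    have hgq : g z ≤ q := by
      calc g z = r + c * (ℓ z - a) := by simp only [g, max_eq_left (sub_nonneg.2 hza.le)]
        _ ≤ r + c * (b' - a) := by gcongr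
        _ = q := by simp only [c, div_mul_cancel₀ _ (sub_pos.2 hab).ne']; ring
    exact (EReal.coe_le_coe_iff.2 hgq).trans (hq z hza.le)
  have hgx : r < g x := by
    have : 0 < c * max (ℓ x - a) 0 := mul_pos hc (lt_max_of_lt_left (sub_pos.2 hx))
    simp only [g]; linarith
  exact (EReal.coe_lt_coe_iff.2 hgx).trans_le (coe_le_lce hg hgf x)

end ConvexEnvelope

lemma LowerSemicontinuous.exists_gt_forall_le_of_isClosed {E : Type*} [PseudoMetricSpace E]
    [ProperSpace E] {f : E → EReal} (hf : LowerSemicontinuous f)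
    (hdom : Bornology.IsBounded {z | f z ≠ ⊤}) {S : Set E} (hS : IsClosed S) {r : ℝ}
    (hr : ∀ z ∈ S, (r : EReal) < f z) : ∃ q : ℝ, r < q ∧ ∀ z ∈ S, (q : EReal) ≤ f z := by
  set K := S ∩ closure {z | f z ≠ ⊤}
  have hK : IsCompact K :=
    Metric.isCompact_of_isClosed_isBounded (hS.inter isClosed_closure)
      (hdom.closure.subset inter_subset_right)
  have hS_top : ∀ z ∈ S, z ∉ K → f z = ⊤ := fun z hzS hzK => by
    by_contra htop
    exact hzK ⟨hzS, subset_closure htop⟩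
  rcases K.eq_empty_or_nonempty with hKe | hKne
  · refine ⟨r + 1, lt_add_one r, fun z hz => ?_⟩
    simp [hS_top z hz (hKe ▸ notMem_empty z)]
  obtain ⟨z₀, hz₀K, hz₀⟩ := (hf.lowerSemicontinuousOn K).exists_isMinOn hKne hK
  obtain ⟨q, hrq, hqz₀⟩ := EReal.lt_iff_exists_real_btwn.1 (hr z₀ hz₀K.1)
  refine ⟨q, EReal.coe_lt_coe_iff.1 hrq, fun z hzS => ?_⟩
  by_cases hzK : z ∈ K
  · exact hqz₀.le.trans (hz₀ hzK)
  · simp [hS_top z hzS hzK]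

theorem stmt_3 {n : ℕ} (f : EuclideanSpace ℝ (Fin n) → EReal)
    (hbot : ∀ x, f x ≠ ⊥) (hlsc : LowerSemicontinuous f)
    (hbdd : Bornology.IsBounded {x | f x ≠ ⊤})
    (xs : EuclideanSpace ℝ (Fin n)) (hproper : f xs ≠ ⊤)
    (hmin : ∀ x, x ≠ xs → f xs < f x) :
    ∀ x, x ≠ xs → lce f xs < lce f x := by
  intro x hx
  obtain ⟨r, hr⟩ : ∃ r : ℝ, f xs = r := ⟨_, (EReal.coe_toReal hproper (hbot xs)).symm⟩
  have hr_le : ∀ z, (r : EReal) ≤ f z := fun z => hr ▸ by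
    rcases eq_or_ne z xs with rfl | hz
    exacts [le_rfl, (hmin z hz).le]
  set ℓ := innerSL ℝ (x - xs)
  have hℓ : ℓ xs < ℓ x := by
    have : ℓ x - ℓ xs = ‖x - xs‖ ^ 2 := by
      simp only [ℓ, innerSL_apply_apply, ← inner_sub_right, real_inner_self_eq_norm_sq]
    exact sub_pos.1 (this ▸ pow_pos (norm_pos_iff.2 (sub_ne_zero.2 hx)) 2)
  obtain ⟨a, hxs_lt, hx_gt⟩ := exists_between hℓ
  obtain ⟨q, hrq, hq⟩ := hlsc.exists_gt_forall_le_of_isClosed hbdd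
    (isClosed_le continuous_const ℓ.continuous) (S := {z | a ≤ ℓ z})
    (fun z hz => hr ▸ hmin z (by rintro rfl; exact hxs_lt.not_ge hz))
  rw [lce_eq_of_forall_coe_le hr_le hr]
  exact coe_lt_lce_of_gap (ℓ.toLinearMap.convexOn convex_univ) hrq hr_le hq
    (ℓ.lipschitz.isBounded_image hbdd).bddAbove hx_gt
end
end

section
/- If the lower convex envelope f̆ of f is proper, z is an interior point of dom(f), and f is convex at z, then f has a subgradient at z: there exists g with f(x) ≥ ⟨g, x − z⟩ + f(z) for all x. -/
open scoped BigOperators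
open Classical

noncomputable section

/-!
Convexity of `f` at `z` says exactly that no convex combination of points of the epigraph of `f`
lies strictly below `(z, f z)`, so this point is on the boundary of the convex hull of the
epigraph. That hull has nonempty interior because `z` is interior to `dom f`, hence it has a
nonzero supporting functional at `(z, f z)`. Its vertical component is negative: otherwise its
horizontal part would attain a local maximum at `z` and vanish. Normalising the vertical
component to `-1` leaves a subgradient.
-/

open Set Filter Topology

theorem EReal.coe_finsetSum {ι : Type*} (s : Finset ι) (g : ι → ℝ) :
    ((∑ i ∈ s, g i : ℝ) : EReal) = ∑ i ∈ s, (g i : EReal) := by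
  induction s using Finset.cons_induction with
  | empty => simp
  | cons a s _ ih => rw [Finset.sum_cons, Finset.sum_cons, EReal.coe_add, ih]

section Epigraph

variable {V : Type*}

def realEpigraph (f : V → EReal) : Set (V × ℝ) := {p | f p.1 ≤ p.2}

theorem exists_mem_realEpigraph {f : V → EReal} {x : V} (hx : f x ≠ ⊤) :
    ∃ b : ℝ, (x, b) ∈ realEpigraph f :=
  let ⟨b, hxb, _⟩ := EReal.lt_iff_exists_real_btwn.1 (lt_top_iff_ne_top.2 hx)
  ⟨b, hxb.le⟩

variable [AddCommGroup V] [Module ℝ V]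

theorem IsConvexAt.le_sum {f : V → EReal} {x : V} (h : IsConvexAt f x) {ι : Type*} [Fintype ι]
    (w : ι → ℝ) (p : ι → V) (hw₀ : ∀ i, 0 ≤ w i) (hw₁ : ∑ i, w i = 1) (hp : ∀ i, f (p i) ≠ ⊤)
    (hx : ∑ i, w i • p i = x) : f x ≤ ∑ i, (w i : EReal) * f (p i) := by
  let e := (Fintype.equivFin ι).symm
  rw [← e.sum_comp]
  exact h _ (w ∘ e) (p ∘ e) (fun _ => hw₀ _) ((e.sum_comp w).trans hw₁) (fun _ => hp _)
    ((e.sum_comp fun i => w i • p i).trans hx)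

theorem IsConvexAt.le_of_mem_convexHull_realEpigraph {f : V → EReal} {z : V}
    (hconv : IsConvexAt f z) {p : V × ℝ} (hp : p ∈ convexHull ℝ (realEpigraph f))
    (hpz : p.1 = z) : f z ≤ p.2 := by
  obtain ⟨ι, _, w, q, hw₀, hw₁, hq, rfl⟩ := mem_convexHull_iff_exists_fintype.1 hp
  rw [Prod.fst_sum] at hpz
  rw [Prod.snd_sum]
  calc f z ≤ ∑ i, (w i : EReal) * f (q i).1 :=
        hconv.le_sum w (fun i => (q i).1) hw₀ hw₁
          (fun i => ne_top_of_le_ne_top (EReal.coe_ne_top _) (hq i)) hpz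
    _ ≤ ∑ i, (w i : EReal) * ((q i).2 : EReal) :=
        Finset.sum_le_sum fun i _ => mul_le_mul_of_nonneg_left (hq i) (by exact_mod_cast hw₀ i)
    _ = ((∑ i, (w i • q i).2 : ℝ) : EReal) := by
        simp only [EReal.coe_finsetSum, Prod.smul_snd, smul_eq_mul, EReal.coe_mul]

theorem mk_mem_affineSpan_realEpigraph {f : V → EReal} {x : V} (hx : f x ≠ ⊤) (t : ℝ) :
    (x, t) ∈ affineSpan ℝ (realEpigraph f) := by
  obtain ⟨b, hb⟩ := exists_mem_realEpigraph hx
  have hb' : (x, b + 1) ∈ realEpigraph f := hb.trans (EReal.coe_le_coe_iff.2 (by linarith))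
  convert affineSpan_mono ℝ (pair_subset hb hb')
    (AffineMap.lineMap_mem_affineSpan_pair (k := ℝ) (t - b) (x, b) (x, b + 1))
  all_goals simp [AffineMap.lineMap_apply]

end Epigraph

theorem ContinuousLinearMap.apply_mk_eq_add_mul {V : Type*} [AddCommGroup V] [Module ℝ V]
    [TopologicalSpace V] (L : V × ℝ →L[ℝ] ℝ) (x : V) (t : ℝ) :
    L (x, t) = L (x, 0) + t * L (0, 1) := by
  rw [← smul_eq_mul, ← map_smul, ← map_add, Prod.smul_mk, smul_zero, smul_eq_mul, mul_one,
    Prod.mk_add_mk, add_zero, zero_add]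

section Normed

variable {V : Type*} [NormedAddCommGroup V] [NormedSpace ℝ V] {f : V → EReal} {z : V}

theorem IsConvexAt.notMem_interior_convexHull_realEpigraph (hconv : IsConvexAt f z) {a : ℝ}
    (ha : f z = a) : (z, a) ∉ interior (convexHull ℝ (realEpigraph f)) := by
  intro h
  have hnhds : ∀ᶠ t in 𝓝 a, (z, t) ∈ convexHull ℝ (realEpigraph f) :=
    (Continuous.prodMk_right z).continuousAt.preimage_mem_nhds (mem_interior_iff_mem_nhds.1 h)
  obtain ⟨t, hta, ht⟩ := hnhds.exists_lt
  have hat := hconv.le_of_mem_convexHull_realEpigraph ht rfl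
  rw [ha, EReal.coe_le_coe_iff] at hat
  exact hta.not_ge hat

theorem interior_convexHull_realEpigraph_nonempty [FiniteDimensional ℝ V]
    (hdom : (interior {x | f x ≠ ⊤}).Nonempty) :
    (interior (convexHull ℝ (realEpigraph f))).Nonempty := by
  rw [(convex_convexHull ℝ _).interior_nonempty_iff_affineSpan_eq_top, affineSpan_convexHull,
    eq_top_iff, ← (isOpen_interior.prod isOpen_univ).affineSpan_eq_top (hdom.prod univ_nonempty)]
  refine affineSpan_le.2 ?_
  rintro ⟨x, t⟩ ⟨hx, -⟩
  exact mk_mem_affineSpan_realEpigraph (interior_subset hx) t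

theorem apply_zero_one_neg_of_forall_le {L : V × ℝ →L[ℝ] ℝ} (hL : L ≠ 0) {a : ℝ} (ha : f z = a)
    (hz : z ∈ interior {x | f x ≠ ⊤}) (hLE : ∀ p ∈ realEpigraph f, L p ≤ L (z, a)) :
    L (0, 1) < 0 := by
  have hle : L (0, 1) ≤ 0 := by
    have := hLE (z, a + 1) (show f z ≤ ((a + 1 : ℝ) : EReal) from
      ha ▸ EReal.coe_le_coe_iff.2 (by linarith))
    rw [L.apply_mk_eq_add_mul z, L.apply_mk_eq_add_mul z a] at this
    linarith
  refine hle.lt_of_ne fun hc => hL ?_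
  have hmax : IsLocalMax (L.comp (ContinuousLinearMap.inl ℝ V ℝ)) z := by
    filter_upwards [mem_interior_iff_mem_nhds.1 hz] with x hx
    obtain ⟨b, hb⟩ := exists_mem_realEpigraph hx
    have hxb := hLE _ hb
    rwa [L.apply_mk_eq_add_mul x, L.apply_mk_eq_add_mul z, hc, mul_zero, mul_zero, add_zero,
      add_zero] at hxb
  have hzero := hmax.hasFDerivAt_eq_zero (ContinuousLinearMap.hasFDerivAt _)
  refine ContinuousLinearMap.ext fun p => ?_
  rw [show L p = L (p.1, p.2) from rfl, L.apply_mk_eq_add_mul, hc, mul_zero, add_zero]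
  exact DFunLike.congr_fun hzero p.1

theorem IsConvexAt.exists_subgradient [FiniteDimensional ℝ V] (hbot : ∀ x, f x ≠ ⊥)
    (hz : z ∈ interior {x | f x ≠ ⊤}) (hconv : IsConvexAt f z) :
    ∃ φ : V →L[ℝ] ℝ, ∀ x, (φ (x - z) : EReal) + f z ≤ f x := by
  have toReal_eq {x : V} (hx : f x ≠ ⊤) : f x = (f x).toReal := (EReal.coe_toReal hx (hbot x)).symm
  set a := (f z).toReal
  have ha : f z = a := toReal_eq (interior_subset hz)
  obtain ⟨L, hL, hLE⟩ := geometric_hahn_banach_of_nonempty_interior_point (convex_convexHull ℝ _)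
    (hconv.notMem_interior_convexHull_realEpigraph ha)
    (interior_convexHull_realEpigraph_nonempty ⟨z, hz⟩)
  have hLS : ∀ p ∈ realEpigraph f, L p ≤ L (z, a) := fun p hp => hLE p (subset_convexHull ℝ _ hp)
  have hc := apply_zero_one_neg_of_forall_le hL ha hz hLS
  refine ⟨(-L (0, 1))⁻¹ • L.comp (ContinuousLinearMap.inl ℝ V ℝ), fun x => ?_⟩
  obtain hx | hx := eq_or_ne (f x) ⊤
  · simp [hx]
  set b := (f x).toReal
  have hb : f x = b := toReal_eq hx
  have hxb := hLS (x, b) hb.le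
  rw [L.apply_mk_eq_add_mul x, L.apply_mk_eq_add_mul z] at hxb
  have hsub : L (x - z, 0) = L (x, 0) - L (z, 0) := by
    rw [← map_sub, Prod.mk_sub_mk, sub_zero]
  rw [ha, hb, ← EReal.coe_add, EReal.coe_le_coe_iff]
  simp only [smul_apply, ContinuousLinearMap.comp_apply,
    ContinuousLinearMap.inl_apply, hsub, smul_eq_mul]
  have : (-L (0, 1))⁻¹ * (L (x, 0) - L (z, 0)) ≤ b - a := by
    rw [inv_mul_le_iff₀ (neg_pos.2 hc)]
    linarith
  linarith

end Normed

theorem stmt_9_general {n : ℕ} (f : EuclideanSpace ℝ (Fin n) → EReal)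
    (hbot : ∀ x, f x ≠ ⊥)
    (z : EuclideanSpace ℝ (Fin n))
    (hz : z ∈ interior {x | f x ≠ ⊤})
    (hconv : IsConvexAt f z) :
    ∃ g : EuclideanSpace ℝ (Fin n),
      ∀ x, ((inner ℝ g (x - z) : ℝ) : EReal) + f z ≤ f x := by
  obtain ⟨φ, hφ⟩ := hconv.exists_subgradient hbot hz
  refine ⟨(InnerProductSpace.toDual ℝ _).symm φ, fun x => ?_⟩
  rw [InnerProductSpace.toDual_symm_apply]
  exact hφ x

theorem stmt_9 {n : ℕ} (f : EuclideanSpace ℝ (Fin n) → EReal)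
    (hbot : ∀ x, f x ≠ ⊥)
    (hproper : (∀ x, lce f x ≠ ⊥) ∧ ∃ x, lce f x ≠ ⊤)
    (z : EuclideanSpace ℝ (Fin n))
    (hz : z ∈ interior {x | f x ≠ ⊤})
    (hconv : IsConvexAt f z) :
    ∃ g : EuclideanSpace ℝ (Fin n),
      ∀ x, ((inner ℝ g (x - z) : ℝ) : EReal) + f z ≤ f x :=
  stmt_9_general f hbot z hz hconv
end
end

section
/- Let f : ℝⁿ → (-∞,∞] be K-Lipschitz on its effective domain with unique minimizer x*, let x₀ ≠ x*, let d be a unit vector, α > 0 a step size, x_m = x₀ + mα d, and d₀ = (x* − x₀)/‖x* − x₀‖. Then with m = ⌊‖x* − x₀‖/α⌋, f(x_m) − f(x*) ≤ Kα + K‖x* − x₀‖·‖d − d₀‖, provided x_m ∈ dom(f). -/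
open scoped BigOperators
open Classical

noncomputable section

/-! Write `xs - x₀ = r • d₀` with `r = ‖xs - x₀‖`. The point `xm = x₀ + (mα) • d` then satisfies
`xm - xs = (mα) • (d - d₀) - (r - mα) • d₀`, and the choice of `m` gives `0 ≤ r - mα < α`, so
`‖xm - xs‖ ≤ α + r ‖d - d₀‖`; Lipschitz continuity between the two points of the domain `xm` and
`xs` finishes the proof. -/

section Floor

variable {k : Type*} [Field k] [LinearOrder k] [IsStrictOrderedRing k] [FloorSemiring k]

theorem Nat.floor_div_mul_le {r α : k} (hr : 0 ≤ r) (hα : 0 < α) : ⌊r / α⌋₊ * α ≤ r :=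
  (le_div_iff₀ hα).1 (Nat.floor_le (div_nonneg hr hα.le))

theorem Nat.sub_floor_div_mul_lt (r : k) {α : k} (hα : 0 < α) : r - ⌊r / α⌋₊ * α < α := by
  have := (div_lt_iff₀ hα).1 (Nat.lt_floor_add_one (r / α))
  linarith

end Floor

theorem norm_smul_sub_smul_le {E : Type*} [SeminormedAddCommGroup E] [NormedSpace ℝ E]
    {t r : ℝ} {u : E} (d : E) (ht : 0 ≤ t) (htr : t ≤ r) (hu : ‖u‖ ≤ 1) :
    ‖t • d - r • u‖ ≤ (r - t) + r * ‖d - u‖ := by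
  have hsplit : t • d - r • u = t • (d - u) - (r - t) • u := by module
  have hdu : 0 ≤ ‖d - u‖ := norm_nonneg _
  calc ‖t • d - r • u‖ ≤ t * ‖d - u‖ + (r - t) * ‖u‖ := by
        rw [hsplit, ← norm_smul_of_nonneg ht, ← norm_smul_of_nonneg (sub_nonneg.2 htr)]
        exact norm_sub_le _ _
    _ ≤ (r - t) + r * ‖d - u‖ := by nlinarith [mul_le_mul_of_nonneg_right htr hdu]

theorem norm_smul_inv_norm_smul {E : Type*} [NormedAddCommGroup E] [NormedSpace ℝ E] (v : E) :
    ‖v‖ • ‖v‖⁻¹ • v = v := by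
  rcases eq_or_ne v 0 with rfl | hv
  · simp
  · exact smul_inv_smul₀ (norm_ne_zero_iff.2 hv) v

theorem stmt_14_general {n : ℕ} (f : EuclideanSpace ℝ (Fin n) → EReal)
    (K : ℝ) (hK : 0 ≤ K)
    (hlip : ∀ x ∈ {x | f x ≠ ⊤}, ∀ y ∈ {x | f x ≠ ⊤},
      f x ≤ f y + ((K * ‖x - y‖ : ℝ) : EReal))
    (xs : EuclideanSpace ℝ (Fin n)) (hxs : f xs ≠ ⊤)
    (x₀ : EuclideanSpace ℝ (Fin n))
    (d : EuclideanSpace ℝ (Fin n))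
    (α : ℝ) (hα : 0 < α)
    (m : ℕ) (hm : m = ⌊‖xs - x₀‖ / α⌋₊)
    (d₀ : EuclideanSpace ℝ (Fin n)) (hd₀ : d₀ = ‖xs - x₀‖⁻¹ • (xs - x₀))
    (xm : EuclideanSpace ℝ (Fin n)) (hxm : xm = x₀ + ((m : ℝ) * α) • d)
    (hdom : f xm ≠ ⊤) :
    f xm ≤ f xs + ((K * α + K * ‖xs - x₀‖ * ‖d - d₀‖ : ℝ) : EReal) := by
  set r := ‖xs - x₀‖
  have hmr : (m : ℝ) * α ≤ r := hm ▸ Nat.floor_div_mul_le (norm_nonneg _) hα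
  have hrm : r - m * α < α := hm ▸ Nat.sub_floor_div_mul_lt r hα
  have hd₀_le : ‖d₀‖ ≤ 1 := by
    simpa [hd₀] using inv_norm_smul_mem_unitClosedBall (xs - x₀)
  have hdist : ‖xm - xs‖ ≤ α + r * ‖d - d₀‖ := by
    have hdiff : xm - xs = ((m : ℝ) * α) • d - r • d₀ := by
      rw [hxm, hd₀, norm_smul_inv_norm_smul]
      abel
    rw [hdiff]
    linarith [norm_smul_sub_smul_le d (by positivity) hmr hd₀_le]
  calc f xm ≤ f xs + ((K * ‖xm - xs‖ : ℝ) : EReal) := hlip xm hdom xs hxs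
    _ ≤ f xs + ((K * α + K * r * ‖d - d₀‖ : ℝ) : EReal) := by
      gcongr
      linarith [mul_le_mul_of_nonneg_left hdist hK]

theorem stmt_14 {n : ℕ} (f : EuclideanSpace ℝ (Fin n) → EReal)
    (hbot : ∀ x, f x ≠ ⊥) (K : ℝ) (hK : 0 ≤ K)
    (hlip : ∀ x ∈ {x | f x ≠ ⊤}, ∀ y ∈ {x | f x ≠ ⊤},
      f x ≤ f y + ((K * ‖x - y‖ : ℝ) : EReal))
    (xs : EuclideanSpace ℝ (Fin n)) (hxs : f xs ≠ ⊤)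
    (hmin : ∀ x, x ≠ xs → f xs < f x)
    (x₀ : EuclideanSpace ℝ (Fin n)) (hne : x₀ ≠ xs)
    (d : EuclideanSpace ℝ (Fin n)) (hd : ‖d‖ = 1)
    (α : ℝ) (hα : 0 < α)
    (m : ℕ) (hm : m = ⌊‖xs - x₀‖ / α⌋₊)
    (d₀ : EuclideanSpace ℝ (Fin n)) (hd₀ : d₀ = ‖xs - x₀‖⁻¹ • (xs - x₀))
    (xm : EuclideanSpace ℝ (Fin n)) (hxm : xm = x₀ + ((m : ℝ) * α) • d)
    (hdom : f xm ≠ ⊤) :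
    f xm ≤ f xs + ((K * α + K * ‖xs - x₀‖ * ‖d - d₀‖ : ℝ) : EReal) :=
  stmt_14_general f K hK hlip xs hxs x₀ d α hα m hm d₀ hd₀ xm hxm hdom
end
end
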